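/- The Ramanujan identity: for t > 0, ν(t) = e^t − N(t), where ν(t) = ∫₀^∞ t^u / Γ(u+1) du and N(t) = ∫₀^∞ e^(-rt) / ( r ((log r)² + π²) ) dr. -/

import Mathlib

/-!
Put `h(t) = ν(t) - eᵗ + N(t)`. Differentiating under the integral sign gives
`ν'(t) = ∫₀^∞ t^(u-1) / Γ(u) du = J(t) + ν(t)` with `J(t) = ∫₀¹ t^(u-1) / Γ(u) du` (shift `u` by 1
on `[1, ∞)`), and `N'(t) = -∫₀^∞ e^(-rt) / ((log r)² + π²) dr`. By the reflection formula
`π / Γ(u) = sin(πu) Γ(1-u)`, and `Γ(1-u) t^(u-1) = ∫₀^∞ r^(-u) e^(-rt) dr`; exchanging the order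
of integration and using `∫₀¹ sin(πu) r^(-u) du = π (1 + 1/r) / ((log r)² + π²)` gives
`J = N - N'`. Hence `h' = h` on `(0, ∞)`. Moreover `h` is continuous on `[0, ∞)` with
`h(0) = 0 - 1 + ∫₀^∞ dr / (r ((log r)² + π²)) = 0`, so `h` vanishes identically.
-/

open MeasureTheory Set Real

namespace Real

/-- Mathlib's `Gamma` vanishes at its poles, so `(Gamma x)⁻¹` is the entire function `1 / Γ`. -/
theorem continuous_inv_Gamma : Continuous fun x : ℝ => (Gamma x)⁻¹ := by
  convert Complex.continuous_re.comp
    (Complex.differentiable_one_div_Gamma.continuous.comp Complex.continuous_ofReal) using 2 with x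
  simp [Complex.Gamma_ofReal, ← Complex.ofReal_inv]

@[fun_prop]
theorem measurable_Gamma : Measurable Gamma := by
  convert continuous_inv_Gamma.measurable.inv
  ext x
  simp

theorem continuous_rpow_sub_one_div_Gamma {t : ℝ} (ht : 0 < t) :
    Continuous fun u => t ^ (u - 1) / Gamma u := by
  simp_rw [div_eq_mul_inv]
  exact (continuous_const.rpow (continuous_sub_right 1) fun _ => Or.inl ht.ne').mul
    continuous_inv_Gamma

theorem rpow_mul_exp_neg_le_Gamma_add_one {a u : ℝ} (ha : 0 ≤ a) (hu : 0 ≤ u) :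
    a ^ u * exp (-a) ≤ Gamma (u + 1) := by
  have hint : IntegrableOn (fun x : ℝ => exp (-x) * x ^ u) (Ioi 0) := by
    simpa using GammaIntegral_convergent (s := u + 1) (by linarith)
  rw [Gamma_eq_integral (by linarith), add_sub_cancel_right, ← integral_exp_neg_Ioi,
    ← integral_const_mul]
  calc ∫ x in Ioi a, a ^ u * exp (-x)
      ≤ ∫ x in Ioi a, exp (-x) * x ^ u := by
        refine setIntegral_mono_on ?_ (hint.mono_set (Ioi_subset_Ioi ha)) measurableSet_Ioi
          fun x hx => ?_
        · simpa [IntegrableOn] using (exp_neg_integrableOn_Ioi a one_pos).const_mul (a ^ u)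
        · rw [mul_comm]
          gcongr
          exact hx.le
    _ ≤ ∫ x in Ioi 0, exp (-x) * x ^ u :=
        setIntegral_mono_set hint
          (ae_restrict_of_forall_mem measurableSet_Ioi fun x hx =>
            mul_nonneg (exp_pos _).le (rpow_nonneg (le_of_lt hx) _))
          (Ioi_subset_Ioi ha).eventuallyLE

theorem rpow_div_Gamma_add_one_le {c u : ℝ} (hc : 0 ≤ c) (hu : 0 ≤ u) :
    c ^ u / Gamma (u + 1) ≤ exp (exp 1 * c) * exp (-u) := by
  have h := rpow_mul_exp_neg_le_Gamma_add_one (mul_nonneg (exp_pos 1).le hc) hu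
  rw [mul_rpow (exp_pos 1).le hc, exp_one_rpow] at h
  rw [div_le_iff₀ (by positivity)]
  calc c ^ u = exp (exp 1 * c) * exp (-u) * (exp u * c ^ u * exp (-(exp 1 * c))) := by
        rw [exp_neg, exp_neg]; field_simp
    _ ≤ _ := by gcongr

theorem integrableOn_rpow_div_Gamma_add_one {c : ℝ} (hc : 0 ≤ c) :
    IntegrableOn (fun u => c ^ u / Gamma (u + 1)) (Ioi 0) := by
  refine Integrable.mono' ((exp_neg_integrableOn_Ioi 0 one_pos).const_mul (exp (exp 1 * c)))
    (by fun_prop : Measurable _).aestronglyMeasurable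
    (ae_restrict_of_forall_mem measurableSet_Ioi fun u hu => ?_)
  have hΓ := Gamma_pos_of_pos (add_pos hu zero_lt_one)
  rw [norm_of_nonneg (div_nonneg (rpow_nonneg hc _) hΓ.le)]
  simpa using rpow_div_Gamma_add_one_le hc (le_of_lt hu)

theorem rpow_sub_one_div_Gamma_le {s c u : ℝ} (hs : 0 < s) (hsc : s ≤ c) (hu : 0 < u) :
    s ^ (u - 1) / Gamma u ≤ s⁻¹ * ((exp 1 * c) ^ u / Gamma (u + 1)) := by
  have hΓ := Gamma_pos_of_pos hu
  rw [Gamma_add_one hu.ne', rpow_sub_one hs.ne', mul_rpow (exp_pos 1).le (hs.le.trans hsc),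
    exp_one_rpow]
  calc s ^ u / s / Gamma u = s⁻¹ * (u * s ^ u / (u * Gamma u)) := by field_simp
    _ ≤ _ := by
        gcongr
        linarith [add_one_le_exp u]

theorem integrableOn_rpow_sub_one_div_Gamma {t : ℝ} (ht : 0 < t) :
    IntegrableOn (fun u => t ^ (u - 1) / Gamma u) (Ioi 0) := by
  refine Integrable.mono' ((integrableOn_rpow_div_Gamma_add_one
    (mul_nonneg (exp_pos 1).le ht.le)).const_mul t⁻¹)
    (by fun_prop : Measurable _).aestronglyMeasurable
    (ae_restrict_of_forall_mem measurableSet_Ioi fun u hu => ?_)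
  rw [norm_of_nonneg (div_nonneg (rpow_nonneg ht.le _) (Gamma_pos_of_pos hu).le)]
  exact rpow_sub_one_div_Gamma_le ht le_rfl hu

theorem hasDerivAt_rpow_div_Gamma_add_one {s u : ℝ} (hs : 0 < s) (hu : 0 < u) :
    HasDerivAt (fun s => s ^ u / Gamma (u + 1)) (s ^ (u - 1) / Gamma u) s := by
  refine ((hasDerivAt_rpow_const (Or.inl hs.ne')).div_const _).congr_deriv ?_
  rw [Gamma_add_one hu.ne', mul_div_mul_left _ _ hu.ne']

theorem integrableOn_rpow_mul_exp_neg_mul {s t : ℝ} (hs : -1 < s) (ht : 0 < t) :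
    IntegrableOn (fun r : ℝ => r ^ s * exp (-r * t)) (Ioi 0) := by
  simpa [mul_comm] using integrableOn_rpow_mul_exp_neg_mul_rpow hs one_pos ht

theorem integral_rpow_neg_mul_exp_neg_mul {u t : ℝ} (hu : u < 1) (ht : 0 < t) :
    ∫ r in Ioi 0, r ^ (-u) * exp (-r * t) = t ^ (u - 1) * Gamma (1 - u) := by
  have h := integral_rpow_mul_exp_neg_mul_Ioi (a := 1 - u) (by linarith) ht
  rw [one_div, inv_rpow ht.le, ← rpow_neg ht.le, neg_sub] at h
  simpa [mul_comm t] using h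

theorem pi_mul_rpow_sub_one_div_Gamma {u t : ℝ} (hu : u ∈ Ioo 0 1) (ht : 0 < t) :
    π * (t ^ (u - 1) / Gamma u) = ∫ r in Ioi 0, sin (π * u) * (r ^ (-u) * exp (-r * t)) := by
  have hsin : sin (π * u) ≠ 0 :=
    (sin_pos_of_pos_of_lt_pi (by nlinarith [pi_pos, hu.1]) (by nlinarith [pi_pos, hu.2])).ne'
  have hΓ : Gamma u ≠ 0 := (Gamma_pos_of_pos hu.1).ne'
  have hrefl : Gamma (1 - u) = π / sin (π * u) / Gamma u := by
    rw [← Gamma_mul_Gamma_one_sub u]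
    field_simp
  rw [integral_const_mul, integral_rpow_neg_mul_exp_neg_mul hu.2 ht, hrefl]
  field_simp

end Real

section ChangeOfVariables

variable {E : Type*} [NormedAddCommGroup E] [NormedSpace ℝ E]

theorem integral_Ioi_zero_eq_integral_comp_exp (g : ℝ → E) :
    ∫ r in Ioi 0, g r = ∫ x, exp x • g (exp x) := by
  simpa [range_exp, abs_of_pos (exp_pos _)] using
    integral_image_eq_integral_abs_deriv_smul MeasurableSet.univ
      (fun x _ => (hasDerivAt_exp x).hasDerivWithinAt) exp_injective.injOn g

theorem integrableOn_Ioi_zero_iff_integrable_comp_exp (g : ℝ → E) :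
    IntegrableOn g (Ioi 0) ↔ Integrable fun x => exp x • g (exp x) := by
  simpa [range_exp, abs_of_pos (exp_pos _)] using
    integrableOn_image_iff_integrableOn_abs_deriv_smul MeasurableSet.univ
      (fun x _ => (hasDerivAt_exp x).hasDerivWithinAt) exp_injective.injOn g

end ChangeOfVariables

theorem inv_sq_add_sq_eq_inv_sq_mul {a : ℝ} (ha : a ≠ 0) (x : ℝ) :
    (x ^ 2 + a ^ 2)⁻¹ = (a ^ 2)⁻¹ * (1 + (x / a) ^ 2)⁻¹ := by
  field_simp
  ring

theorem integrable_inv_sq_add_sq {a : ℝ} (ha : a ≠ 0) :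
    Integrable fun x : ℝ => (x ^ 2 + a ^ 2)⁻¹ := by
  simpa only [inv_sq_add_sq_eq_inv_sq_mul ha] using
    (integrable_inv_one_add_sq.comp_div ha).const_mul (a ^ 2)⁻¹

theorem integral_univ_inv_sq_add_sq {a : ℝ} (ha : 0 < a) :
    ∫ x : ℝ, (x ^ 2 + a ^ 2)⁻¹ = π / a := by
  simp_rw [inv_sq_add_sq_eq_inv_sq_mul ha.ne', integral_const_mul,
    Measure.integral_comp_div (fun y : ℝ => (1 + y ^ 2)⁻¹), integral_univ_inv_one_add_sq,
    abs_of_pos ha, smul_eq_mul]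
  field_simp

theorem integral_sin_mul_exp_neg_mul (x : ℝ) :
    ∫ u in (0 : ℝ)..1, sin (π * u) * exp (-(u * x)) = π * (1 + exp (-x)) / (x ^ 2 + π ^ 2) := by
  have hD : x ^ 2 + π ^ 2 ≠ 0 := by positivity
  let F : ℝ → ℝ := fun u =>
    -(exp (-(u * x)) * (x * sin (π * u) + π * cos (π * u))) / (x ^ 2 + π ^ 2)
  have hF : ∀ u, HasDerivAt F (sin (π * u) * exp (-(u * x))) u := by
    intro u
    have hθ : HasDerivAt (fun u : ℝ => π * u) π u := by
      simpa using (hasDerivAt_id u).const_mul π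
    refine ((((hasDerivAt_mul_const x).neg.exp).mul
      ((hθ.sin.const_mul x).add (hθ.cos.const_mul π))).neg.div_const _).congr_deriv ?_
    simp only [Pi.neg_apply, Pi.add_apply]
    field_simp
    ring
  rw [intervalIntegral.integral_eq_sub_of_hasDerivAt (fun u _ => hF u)
    (by apply Continuous.intervalIntegrable; fun_prop)]
  simp only [F, mul_one, mul_zero, sin_pi, cos_pi, sin_zero, cos_zero, one_mul, zero_mul,
    neg_zero, exp_zero]
  field_simp
  ring

theorem integral_sin_mul_rpow_neg {r : ℝ} (hr : 0 < r) :
    ∫ u in Ioo 0 1, sin (π * u) * r ^ (-u) = π * (1 + r⁻¹) / (log r ^ 2 + π ^ 2) := by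
  rw [← integral_Ioc_eq_integral_Ioo, ← intervalIntegral.integral_of_le zero_le_one]
  have hrpow : ∀ u, r ^ (-u) = exp (-(u * log r)) := fun u => by
    rw [rpow_def_of_pos hr, mul_neg, mul_comm]
  simp_rw [hrpow, integral_sin_mul_exp_neg_mul, exp_neg, exp_log hr]

theorem eq_exp_mul_of_hasDerivAt_self {f : ℝ → ℝ} {a b : ℝ} (hab : a ≤ b)
    (hf : ContinuousOn f (Icc a b)) (hf' : ∀ x ∈ Ioo a b, HasDerivAt f (f x) x) :
    f b = exp (b - a) * f a := by
  rcases hab.eq_or_lt with rfl | hab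
  · simp
  have hg : ∀ x ∈ Ioo a b, HasDerivAt (fun x => exp (-x) * f x) 0 x := fun x hx =>
    ((hasDerivAt_neg x).exp.mul (hf' x hx)).congr_deriv (by ring)
  obtain ⟨c, -, hc⟩ := exists_hasDerivAt_eq_slope (fun x => exp (-x) * f x) (fun _ => 0) hab
    ((continuous_neg.rexp.continuousOn).mul hf) hg
  rw [eq_comm, div_eq_zero_iff, sub_eq_zero, or_iff_left (sub_ne_zero.2 hab.ne')] at hc
  rw [sub_eq_add_neg, exp_add, mul_assoc, ← hc, ← mul_assoc, ← exp_add, add_neg_cancel, exp_zero,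
    one_mul]

noncomputable def volterraNu (t : ℝ) : ℝ := ∫ u in Ioi 0, t ^ u / Gamma (u + 1)

theorem hasDerivAt_volterraNu {t : ℝ} (ht : 0 < t) :
    HasDerivAt volterraNu (∫ u in Ioi 0, t ^ (u - 1) / Gamma u) t := by
  have hball : ∀ s ∈ Metric.ball t (t / 2), t / 2 < s ∧ s < 2 * t := fun s hs => by
    have := abs_lt.mp (Real.dist_eq s t ▸ Metric.mem_ball.mp hs)
    constructor <;> linarith
  refine (hasDerivAt_integral_of_dominated_loc_of_deriv_le (μ := volume.restrict (Ioi 0))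
    (F := fun s u => s ^ u / Gamma (u + 1)) (F' := fun s u => s ^ (u - 1) / Gamma u)
    (Metric.ball_mem_nhds t (half_pos ht))
    (.of_forall fun s => (by fun_prop : Measurable _).aestronglyMeasurable)
    (integrableOn_rpow_div_Gamma_add_one ht.le)
    (by fun_prop : Measurable _).aestronglyMeasurable
    (ae_restrict_of_forall_mem measurableSet_Ioi fun u hu s hs => ?_)
    ((integrableOn_rpow_div_Gamma_add_one
      (mul_nonneg (exp_pos 1).le (mul_pos two_pos ht).le)).const_mul (t / 2)⁻¹)
    (ae_restrict_of_forall_mem measurableSet_Ioi fun u hu s hs =>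
      hasDerivAt_rpow_div_Gamma_add_one (half_pos ht |>.trans (hball s hs).1) hu)).2
  obtain ⟨hs₁, hs₂⟩ := hball s hs
  have hs : 0 < s := (half_pos ht).trans hs₁
  rw [norm_of_nonneg (div_nonneg (rpow_nonneg hs.le _) (Gamma_pos_of_pos hu).le)]
  refine (rpow_sub_one_div_Gamma_le hs hs₂.le hu).trans ?_
  have hΓ := Gamma_pos_of_pos (add_pos hu zero_lt_one)
  gcongr

theorem integral_rpow_sub_one_div_Gamma_Ioi {t : ℝ} (ht : 0 < t) :
    ∫ u in Ioi 0, t ^ (u - 1) / Gamma u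
      = (∫ u in Ioo 0 1, t ^ (u - 1) / Gamma u) + volterraNu t := by
  have hint := integrableOn_rpow_sub_one_div_Gamma ht
  have hshift : ∫ u in Ioi 1, t ^ (u - 1) / Gamma u = volterraNu t := by
    have := (measurePreserving_add_right volume (1 : ℝ)).setIntegral_preimage_emb
      (measurableEmbedding_addRight 1) (fun u => t ^ (u - 1) / Gamma u) (Ioi 1)
    simpa [volterraNu] using this.symm
  rw [← Ioo_union_Ici_eq_Ioi zero_lt_one,
    setIntegral_union ((Iio_disjoint_Ici le_rfl).mono_left Ioo_subset_Iio_self) measurableSet_Ici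
      (hint.mono_set Ioo_subset_Ioi_self) (hint.mono_set (Ici_subset_Ioi.2 zero_lt_one)),
    integral_Ici_eq_integral_Ioi, hshift]

theorem continuousOn_volterraNu {T : ℝ} (hT : 0 ≤ T) : ContinuousOn volterraNu (Icc 0 T) := by
  refine continuousOn_of_dominated (bound := fun u => T ^ u / Gamma (u + 1))
    (fun s _ => (by fun_prop : Measurable _).aestronglyMeasurable)
    (fun s hs => ae_restrict_of_forall_mem measurableSet_Ioi fun u hu => ?_)
    (integrableOn_rpow_div_Gamma_add_one hT)
    (ae_restrict_of_forall_mem measurableSet_Ioi fun u hu =>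
      ((continuous_rpow_const (le_of_lt hu)).div_const _).continuousOn)
  have hΓ := Gamma_pos_of_pos (add_pos hu zero_lt_one)
  obtain ⟨hs₀, hsT⟩ := hs
  rw [norm_of_nonneg (div_nonneg (rpow_nonneg hs₀ _) hΓ.le)]
  gcongr
  exact le_of_lt hu

theorem volterraNu_zero : volterraNu 0 = 0 := by
  rw [volterraNu, setIntegral_congr_fun measurableSet_Ioi (g := 0) fun u hu => by
    simp [zero_rpow (ne_of_gt hu)]]
  exact integral_zero ℝ ℝ

noncomputable def ramanujanKernel (r : ℝ) : ℝ := (r * (log r ^ 2 + π ^ 2))⁻¹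

theorem exp_smul_ramanujanKernel_exp (x : ℝ) :
    exp x • ramanujanKernel (exp x) = (x ^ 2 + π ^ 2)⁻¹ := by
  rw [ramanujanKernel, log_exp, smul_eq_mul, mul_inv, ← mul_assoc, mul_inv_cancel₀ (exp_pos x).ne',
    one_mul]

theorem integrableOn_ramanujanKernel : IntegrableOn ramanujanKernel (Ioi 0) := by
  simpa only [integrableOn_Ioi_zero_iff_integrable_comp_exp, exp_smul_ramanujanKernel_exp] using
    integrable_inv_sq_add_sq pi_ne_zero

theorem integral_ramanujanKernel : ∫ r in Ioi 0, ramanujanKernel r = 1 := by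
  simp only [integral_Ioi_zero_eq_integral_comp_exp, exp_smul_ramanujanKernel_exp,
    integral_univ_inv_sq_add_sq pi_pos, div_self pi_ne_zero]

noncomputable def ramanujanN (t : ℝ) : ℝ :=
  ∫ r in Ioi 0, exp (-r * t) / (r * (log r ^ 2 + π ^ 2))

theorem norm_exp_neg_mul_div_le_ramanujanKernel {r s : ℝ} (hr : 0 < r) (hs : 0 ≤ s) :
    ‖exp (-r * s) / (r * (log r ^ 2 + π ^ 2))‖ ≤ ramanujanKernel r := by
  rw [norm_of_nonneg (by positivity), div_eq_mul_inv]
  exact mul_le_of_le_one_left (by positivity) (exp_le_one_iff.2 (by nlinarith))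

theorem integrableOn_exp_neg_mul_div_mul_log_sq_add_pi_sq {s : ℝ} (hs : 0 ≤ s) :
    IntegrableOn (fun r => exp (-r * s) / (r * (log r ^ 2 + π ^ 2))) (Ioi 0) :=
  integrableOn_ramanujanKernel.mono' (by fun_prop : Measurable _).aestronglyMeasurable
    (ae_restrict_of_forall_mem measurableSet_Ioi fun _ hr =>
      norm_exp_neg_mul_div_le_ramanujanKernel hr hs)

theorem ramanujanN_zero : ramanujanN 0 = 1 := by
  simpa [ramanujanN, ramanujanKernel] using integral_ramanujanKernel

theorem continuousOn_ramanujanN : ContinuousOn ramanujanN (Ici 0) :=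
  continuousOn_of_dominated (fun _ _ => (by fun_prop : Measurable _).aestronglyMeasurable)
    (fun _ hs => ae_restrict_of_forall_mem measurableSet_Ioi fun _ hr =>
      norm_exp_neg_mul_div_le_ramanujanKernel hr hs)
    integrableOn_ramanujanKernel (.of_forall fun _ => by fun_prop)

theorem exp_neg_mul_div_log_sq_add_pi_sq_le {a r s : ℝ} (hr : 0 ≤ r) (has : a ≤ s) :
    exp (-r * s) / (log r ^ 2 + π ^ 2) ≤ (π ^ 2)⁻¹ * exp (-a * r) := by
  rw [div_eq_mul_inv, mul_comm]
  exact mul_le_mul (inv_anti₀ (by positivity) (by nlinarith [sq_nonneg (log r)]))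
    (exp_le_exp.2 (by nlinarith)) (exp_pos _).le (by positivity)

theorem integrableOn_exp_neg_mul_div_log_sq_add_pi_sq {s : ℝ} (hs : 0 < s) :
    IntegrableOn (fun r => exp (-r * s) / (log r ^ 2 + π ^ 2)) (Ioi 0) :=
  ((exp_neg_integrableOn_Ioi 0 hs).const_mul (π ^ 2)⁻¹).mono'
    (by fun_prop : Measurable _).aestronglyMeasurable
    (ae_restrict_of_forall_mem measurableSet_Ioi fun r hr => by
      rw [norm_of_nonneg (by positivity)]
      exact exp_neg_mul_div_log_sq_add_pi_sq_le (le_of_lt hr) le_rfl)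

theorem hasDerivAt_ramanujanN {t : ℝ} (ht : 0 < t) :
    HasDerivAt ramanujanN (-∫ r in Ioi 0, exp (-r * t) / (log r ^ 2 + π ^ 2)) t := by
  have hball : ∀ s ∈ Metric.ball t (t / 2), t / 2 < s := fun s hs => by
    have := abs_lt.mp (Real.dist_eq s t ▸ Metric.mem_ball.mp hs)
    linarith
  rw [← integral_neg]
  refine (hasDerivAt_integral_of_dominated_loc_of_deriv_le (μ := volume.restrict (Ioi 0))
    (F := fun s r => exp (-r * s) / (r * (log r ^ 2 + π ^ 2)))
    (F' := fun s r => -(exp (-r * s) / (log r ^ 2 + π ^ 2)))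
    (Metric.ball_mem_nhds t (half_pos ht))
    (.of_forall fun s => (by fun_prop : Measurable _).aestronglyMeasurable)
    (integrableOn_exp_neg_mul_div_mul_log_sq_add_pi_sq ht.le)
    (by fun_prop : Measurable _).aestronglyMeasurable
    (ae_restrict_of_forall_mem measurableSet_Ioi fun r hr s hs => ?_)
    ((exp_neg_integrableOn_Ioi 0 (half_pos ht)).const_mul (π ^ 2)⁻¹)
    (ae_restrict_of_forall_mem measurableSet_Ioi fun r hr s hs => ?_)).2
  · rw [norm_neg, norm_of_nonneg (by positivity)]
    exact exp_neg_mul_div_log_sq_add_pi_sq_le (le_of_lt hr) (hball s hs).le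
  · have hr : r ≠ 0 := ne_of_gt hr
    refine ((((hasDerivAt_id s).const_mul (-r)).exp).div_const _).congr_deriv ?_
    simp only [id]
    field_simp

theorem integral_rpow_sub_one_div_Gamma_Ioo {t : ℝ} (ht : 0 < t) :
    ∫ u in Ioo 0 1, t ^ (u - 1) / Gamma u
      = (∫ r in Ioi 0, exp (-r * t) / (log r ^ 2 + π ^ 2)) + ramanujanN t := by
  set f : ℝ → ℝ → ℝ := fun u r => sin (π * u) * (r ^ (-u) * exp (-r * t))
  have hf_nonneg : ∀ u ∈ Ioo (0 : ℝ) 1, ∀ r ∈ Ioi (0 : ℝ), 0 ≤ f u r := fun u hu r hr =>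
    mul_nonneg
      (sin_nonneg_of_nonneg_of_le_pi (by nlinarith [pi_pos, hu.1]) (by nlinarith [pi_pos, hu.2]))
      (mul_nonneg (rpow_nonneg (le_of_lt hr) _) (exp_pos _).le)
  have hint : Integrable (Function.uncurry f)
      ((volume.restrict (Ioo 0 1)).prod (volume.restrict (Ioi 0))) := by
    rw [integrable_prod_iff (by fun_prop)]
    constructor
    · refine ae_restrict_of_forall_mem measurableSet_Ioo fun u hu => ?_
      exact (integrableOn_rpow_mul_exp_neg_mul (s := -u) (by linarith [hu.2]) ht).const_mul
        (sin (π * u))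
    · refine IntegrableOn.congr_fun
        (((continuous_rpow_sub_one_div_Gamma ht).integrableOn_Icc.mono_set
          Ioo_subset_Icc_self).const_mul π) (fun u hu => ?_) measurableSet_Ioo
      rw [pi_mul_rpow_sub_one_div_Gamma hu ht]
      exact setIntegral_congr_fun measurableSet_Ioi fun r hr =>
        (norm_of_nonneg (hf_nonneg u hu r hr)).symm
  calc ∫ u in Ioo 0 1, t ^ (u - 1) / Gamma u
      = π⁻¹ * ∫ u in Ioo 0 1, ∫ r in Ioi 0, f u r := by
        rw [← setIntegral_congr_fun measurableSet_Ioo fun u hu =>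
            pi_mul_rpow_sub_one_div_Gamma hu ht,
          integral_const_mul, inv_mul_cancel_left₀ pi_ne_zero]
    _ = π⁻¹ * ∫ r in Ioi 0, ∫ u in Ioo 0 1, f u r := by rw [integral_integral_swap hint]
    _ = ∫ r in Ioi 0, (exp (-r * t) / (log r ^ 2 + π ^ 2)
          + exp (-r * t) / (r * (log r ^ 2 + π ^ 2))) := by
        rw [← integral_const_mul]
        refine setIntegral_congr_fun measurableSet_Ioi fun r hr => ?_
        have hr₀ : r ≠ 0 := ne_of_gt hr
        simp only [f, ← mul_assoc, integral_mul_const, integral_sin_mul_rpow_neg hr]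
        field_simp
    _ = _ := integral_add (integrableOn_exp_neg_mul_div_log_sq_add_pi_sq ht)
        (integrableOn_exp_neg_mul_div_mul_log_sq_add_pi_sq ht.le)

theorem hasDerivAt_volterraNu_sub_exp_add_ramanujanN {t : ℝ} (ht : 0 < t) :
    HasDerivAt (fun s => volterraNu s - exp s + ramanujanN s)
      (volterraNu t - exp t + ramanujanN t) t := by
  refine (((hasDerivAt_volterraNu ht).sub (hasDerivAt_exp t)).add
    (hasDerivAt_ramanujanN ht)).congr_deriv ?_
  rw [integral_rpow_sub_one_div_Gamma_Ioi ht, integral_rpow_sub_one_div_Gamma_Ioo ht]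
  ring

/-- The Ramanujan identity: for `t > 0`,
`ν(t) = e^t − N(t)`, where `ν(t) = ∫₀^∞ t^u / Γ(u+1) du` and
`N(t) = ∫₀^∞ e^(-rt) / ( r ((log r)² + π²) ) dr`. -/
theorem ramanujan_identity (t : ℝ) (ht : 0 < t) :
    ∫ u in Ioi (0 : ℝ), t ^ u / Real.Gamma (u + 1) =
      Real.exp t -
        ∫ r in Ioi (0 : ℝ),
          Real.exp (-r * t) / (r * ((Real.log r) ^ 2 + π ^ 2)) := by
  have hcont : ContinuousOn (fun s => volterraNu s - exp s + ramanujanN s) (Icc 0 t) :=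
    ((continuousOn_volterraNu ht.le).sub continuous_exp.continuousOn).add
      (continuousOn_ramanujanN.mono Icc_subset_Ici_self)
  have h := eq_exp_mul_of_hasDerivAt_self ht.le hcont fun s hs =>
    hasDerivAt_volterraNu_sub_exp_add_ramanujanN hs.1
  rw [volterraNu_zero, ramanujanN_zero, exp_zero, zero_sub, neg_add_cancel, mul_zero] at h
  change volterraNu t = exp t - ramanujanN t
  linarith
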